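/- Let G be a symmetric positive definite matrix, H symmetric with κ_min·G ⪯ H, and let β̂, β* ∈ ℝ^d satisfy S = H(β̂ - β*) for some vector S. Then for every vector φ, |φ^T β̂ - φ^T β*| ≤ κ_min^{-1} · ‖S‖_{G^{-1}} · ‖φ‖_{G^{-1}}, where ‖x‖_M = sqrt(x^T M x). -/

import Mathlib

open Matrix

/-!
With `u = β̂ - β*`, the weighted Cauchy–Schwarz inequality `|x ⬝ᵥ y| ≤ ‖x‖_G ‖y‖_{G⁻¹}` gives
`|φ ⬝ᵥ u| ≤ ‖u‖_G ‖φ‖_{G⁻¹}`. Applied to `u` and `S` it also gives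
`κ ‖u‖_G² ≤ u ⬝ᵥ H u = u ⬝ᵥ S ≤ ‖u‖_G ‖S‖_{G⁻¹}`, i.e. `‖u‖_G ≤ κ⁻¹ ‖S‖_{G⁻¹}`.
-/

namespace Matrix

variable {n : Type*} [Fintype n]

theorem PosSemidef.sq_dotProduct_mulVec_le {G : Matrix n n ℝ} (hG : G.PosSemidef) (x y : n → ℝ) :
    (x ⬝ᵥ G *ᵥ y) ^ 2 ≤ (x ⬝ᵥ G *ᵥ x) * (y ⬝ᵥ G *ᵥ y) := by
  let := G.toSeminormedAddCommGroup hG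
  let := G.toInnerProductSpace hG
  have hinner (v w : n → ℝ) : inner ℝ v w = v ⬝ᵥ G *ᵥ w := dotProduct_comm _ _
  simpa only [sq, hinner] using real_inner_mul_inner_self_le x y

variable [DecidableEq n]

theorem PosDef.sq_dotProduct_le {G : Matrix n n ℝ} (hG : G.PosDef) (x y : n → ℝ) :
    (x ⬝ᵥ y) ^ 2 ≤ (x ⬝ᵥ G *ᵥ x) * (y ⬝ᵥ G⁻¹ *ᵥ y) := by
  have hGy : G *ᵥ (G⁻¹ *ᵥ y) = y := by
    rw [mulVec_mulVec, mul_nonsing_inv _ (G.isUnit_iff_isUnit_det.mp hG.isUnit), one_mulVec]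
  have := hG.posSemidef.sq_dotProduct_mulVec_le x (G⁻¹ *ᵥ y)
  rwa [hGy, dotProduct_comm (G⁻¹ *ᵥ y)] at this

theorem PosDef.abs_dotProduct_le {G : Matrix n n ℝ} (hG : G.PosDef) (x y : n → ℝ) :
    |x ⬝ᵥ y| ≤ √(x ⬝ᵥ G *ᵥ x) * √(y ⬝ᵥ G⁻¹ *ᵥ y) := by
  rw [← Real.sqrt_mul (by simpa using hG.posSemidef.dotProduct_mulVec_nonneg x)]
  exact Real.abs_le_sqrt (hG.sq_dotProduct_le x y)

theorem PosDef.sqrt_dotProduct_mulVec_le_of_mul_le {G : Matrix n n ℝ} (hG : G.PosDef) {κ : ℝ}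
    (hκ : 0 < κ) {u s : n → ℝ} (h : κ * (u ⬝ᵥ G *ᵥ u) ≤ u ⬝ᵥ s) :
    √(u ⬝ᵥ G *ᵥ u) ≤ κ⁻¹ * √(s ⬝ᵥ G⁻¹ *ᵥ s) := by
  set a := √(u ⬝ᵥ G *ᵥ u)
  set b := √(s ⬝ᵥ G⁻¹ *ᵥ s)
  have ha : a ^ 2 = u ⬝ᵥ G *ᵥ u :=
    Real.sq_sqrt (by simpa using hG.posSemidef.dotProduct_mulVec_nonneg u)
  have hab : κ * a ^ 2 ≤ a * b := by
    rw [ha]; exact h.trans ((le_abs_self _).trans (hG.abs_dotProduct_le u s))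
  rw [le_inv_mul_iff₀ hκ]
  nlinarith [Real.sqrt_nonneg (u ⬝ᵥ G *ᵥ u), Real.sqrt_nonneg (s ⬝ᵥ G⁻¹ *ᵥ s)]

end Matrix

theorem concentration_key_step_general {d : ℕ} (G H : Matrix (Fin d) (Fin d) ℝ)
    (hG : G.PosDef) (κ : ℝ) (hκ : 0 < κ)
    (hle : ∀ x : Fin d → ℝ, κ * (x ⬝ᵥ G *ᵥ x) ≤ x ⬝ᵥ H *ᵥ x)
    (βhat βstar S : Fin d → ℝ) (hS : S = H *ᵥ (βhat - βstar)) (φ : Fin d → ℝ) :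
    |φ ⬝ᵥ βhat - φ ⬝ᵥ βstar| ≤
      κ⁻¹ * Real.sqrt (S ⬝ᵥ G⁻¹ *ᵥ S) * Real.sqrt (φ ⬝ᵥ G⁻¹ *ᵥ φ) := by
  set u := βhat - βstar
  have hu : φ ⬝ᵥ βhat - φ ⬝ᵥ βstar = u ⬝ᵥ φ := by rw [← dotProduct_sub, dotProduct_comm]
  have hκu : κ * (u ⬝ᵥ G *ᵥ u) ≤ u ⬝ᵥ S := hS ▸ hle u
  rw [hu]
  calc |u ⬝ᵥ φ| ≤ √(u ⬝ᵥ G *ᵥ u) * √(φ ⬝ᵥ G⁻¹ *ᵥ φ) := hG.abs_dotProduct_le u φ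
    _ ≤ κ⁻¹ * √(S ⬝ᵥ G⁻¹ *ᵥ S) * √(φ ⬝ᵥ G⁻¹ *ᵥ φ) := by
      gcongr; exact hG.sqrt_dotProduct_mulVec_le_of_mul_le hκ hκu

theorem concentration_key_step {d : ℕ} (G H : Matrix (Fin d) (Fin d) ℝ)
    (hG : G.PosDef) (hHsymm : H.IsSymm) (κ : ℝ) (hκ : 0 < κ)
    (hle : ∀ x : Fin d → ℝ, κ * (x ⬝ᵥ G *ᵥ x) ≤ x ⬝ᵥ H *ᵥ x)
    (βhat βstar S : Fin d → ℝ) (hS : S = H *ᵥ (βhat - βstar)) (φ : Fin d → ℝ) :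
    |φ ⬝ᵥ βhat - φ ⬝ᵥ βstar| ≤
      κ⁻¹ * Real.sqrt (S ⬝ᵥ G⁻¹ *ᵥ S) * Real.sqrt (φ ⬝ᵥ G⁻¹ *ᵥ φ) :=
  concentration_key_step_general G H hG κ hκ hle βhat βstar S hS φ
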